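/- For every k ≥ 1 and every unitary U ∈ U(d^n), one has E_{h₁,…,h_k ∈ F_d^{2n}} d^{−n} tr(∂_{h_k}⋯∂_{h₁} U) = 1 if and only if U ∈ P^{(k−1)}. -/

import Mathlib

/-!
Conjugating by all Weyl operators and averaging is the trace projection,
`∑_h W_h A W_h* = d^n tr(A) I`: the `Z`-part of the average kills the off-diagonal entries and
the `X`-part spreads the diagonal evenly. Hence `E_h d^{-n} tr(∂_h V) = |tr V|² / d^{2n}`,
and for unitary `V` and `A = d^n V - tr(V) I` the identity
`tr(A* A) = d^n (d^{2n} - |tr V|²)` shows that this lies in `[0, 1]` and equals `1` exactly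
when `V` is a phase. The quantity of order `k + 1` at `V` is the average over `h` of the
quantity of order `k` at the unitary `∂_h V`, so by induction all of them lie in `[0, 1]`
(in the partial order of `ℂ`), and such an average is `1` iff every term is `1`, which is the
recursion defining the Pauli polynomials.
-/

open Matrix Complex

namespace CH

variable (d n : ℕ) [NeZero d]

/-- Phase space `F_d^{2n}`, written as pairs `(u, v)` with `u, v ∈ F_d^n`. -/
abbrev PSpace := (Fin n → ZMod d) × (Fin n → ZMod d)

/-- Linear maps on `ℂ^{F_d^n}`, as matrices. -/
abbrev Mat := Matrix (Fin n → ZMod d) (Fin n → ZMod d) ℂ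

/-- `ω = e^{2πi/d}`. -/
noncomputable def omg : ℂ := Complex.exp (2 * Real.pi * Complex.I / d)

/-- `τ = (-1)^d e^{iπ/d}`. -/
noncomputable def tau : ℂ := (-1 : ℂ) ^ d * Complex.exp (Real.pi * Complex.I / d)

/-- `D = 2d` if `d = 2`, else `D = d`. -/
def Dd : ℕ := if d = 2 then 4 else d

/-- The translation operator `X^v`, with `X^v |u⟩ = |u + v⟩`. -/
noncomputable def Xop (v : Fin n → ZMod d) : Mat d n :=
  Matrix.of fun u u' => if u = u' + v then 1 else 0

/-- The phase operator `Z^v`, with `Z^v |u⟩ = ω^{u·v} |u⟩`. -/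
noncomputable def Zop (v : Fin n → ZMod d) : Mat d n :=
  Matrix.diagonal fun u => omg d ^ (∑ i, u i * v i : ZMod d).val

/-- The Weyl operator `W_{(u,v)} = τ^{-(|u₁v₁| + ⋯ + |uₙvₙ|)} Z^u X^v`. -/
noncomputable def Weyl (a : PSpace d n) : Mat d n :=
  tau d ^ (-(∑ i, ((a.1 i * a.2 i).val : ℤ))) • (Zop d n a.1 * Xop d n a.2)

/-- Normalized trace inner product `⟨A,B⟩ = d^{-n} tr(A* B)`. -/
noncomputable def trInner (A B : Mat d n) : ℂ := ((d : ℂ) ^ n)⁻¹ * (Aᴴ * B).trace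

/-- Normalized Frobenius norm `‖A‖₂ = ⟨A,A⟩^{1/2}`. -/
noncomputable def hsNorm (A : Mat d n) : ℝ := Real.sqrt (trInner d n A A).re

/-- Pauli derivative `∂_h U = W_h U W_h* U*`. -/
noncomputable def pderiv (h : PSpace d n) (U : Mat d n) : Mat d n :=
  Weyl d n h * U * (Weyl d n h)ᴴ * Uᴴ

/-- The quantity `‖U‖_{P^k}^{2^k} = E_{h₁,…,h_k} d^{-n} tr(∂_{h_k} ⋯ ∂_{h₁} U)`. -/
noncomputable def pq : ℕ → Mat d n → ℂ
  | 0, U => ((d : ℂ) ^ n)⁻¹ * U.trace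
  | (k+1), U => ((d : ℂ) ^ (2*n))⁻¹ * ∑ h : PSpace d n, pq k (pderiv d n h U)

/-- The `k`-th Pauli uniformity norm `‖U‖_{P^k}`, the `2^k`-th root of `pq k U`. -/
noncomputable def pnorm (k : ℕ) (U : Mat d n) : ℝ := (pq d n k U).re ^ (((2:ℝ) ^ k)⁻¹)

/-- The Pauli group `C^{(1)} = {τ^p W_h : p ∈ Z_D, h ∈ F_d^{2n}}`. -/
def pauliGroup : Set (Mat d n) :=
  {U | ∃ (p : ℕ) (h : PSpace d n), U = tau d ^ p • Weyl d n h}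

/-- The Clifford hierarchy. -/
def cliff : ℕ → Set (Mat d n)
  | 0 => {U | ∃ θ : ℝ, U = Complex.exp (θ * Complex.I) • (1 : Mat d n)}
  | 1 => pauliGroup d n
  | (k+2) => {U | U ∈ unitary (Mat d n) ∧
      ∀ P ∈ pauliGroup d n, U * P * Uᴴ ∈ cliff (k+1)}

/-- Pauli polynomials of degree at most `k`. -/
def ppoly : ℕ → Set (Mat d n)
  | 0 => {U | ∃ θ : ℝ, U = Complex.exp (θ * Complex.I) • (1 : Mat d n)}
  | (k+1) => {U | U ∈ unitary (Mat d n) ∧ ∀ h : PSpace d n, pderiv d n h U ∈ ppoly k}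

/-- Symplectic form `[(u,v),(u',v')] = u·v' - u'·v` on `F_d^{2n}`. -/
def symp (a b : PSpace d n) : ZMod d :=
  (∑ i, a.1 i * b.2 i) - (∑ i, b.1 i * a.2 i)

/-- Multiplication of the Heisenberg group. -/
def heisMul (β : PSpace d n → PSpace d n → ZMod (Dd d))
    (x y : ZMod (Dd d) × PSpace d n) : ZMod (Dd d) × PSpace d n :=
  (x.1 + y.1 + β x.2 y.2, x.2 + y.2)

open ComplexConjugate
open scoped ComplexOrder BigOperators

variable {d n}

lemma _root_.Fintype.expect_eq_iff_of_le {ι α : Type*} [Fintype ι] [Nonempty ι]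
    [AddCommGroup α] [PartialOrder α] [IsOrderedAddMonoid α] [Module ℚ≥0 α]
    {f : ι → α} {a : α} (hf : ∀ i, f i ≤ a) : 𝔼 i, f i = a ↔ ∀ i, f i = a := by
  have h := Fintype.expect_eq_zero_iff_of_nonneg (f := fun i => a - f i)
    (fun i => sub_nonneg.2 (hf i))
  rw [Finset.expect_sub_distrib, Finset.expect_const Finset.univ_nonempty, sub_eq_zero,
    eq_comm] at h
  simpa [funext_iff, sub_eq_zero, eq_comm] using h

section UnitaryTrace

variable {ι : Type*} [Fintype ι] [DecidableEq ι] {V : Matrix ι ι ℂ}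

lemma trace_conjTranspose_mul_self_sub_smul_one (hV : V ∈ unitary (Matrix ι ι ℂ)) :
    let A := (Fintype.card ι : ℂ) • V - V.trace • 1
    (Aᴴ * A).trace =
      Fintype.card ι * ((Fintype.card ι : ℂ) ^ 2 - V.trace * conj V.trace) := by
  have hVV : Vᴴ * V = 1 := hV.1
  simp only [conjTranspose_sub, conjTranspose_smul, conjTranspose_one, sub_mul, mul_sub,
    smul_mul, Matrix.one_mul, trace_sub, trace_smul, trace_one, smul_eq_mul, Matrix.mul_smul,
    Matrix.mul_one, hVV, trace_conjTranspose, star_natCast, RCLike.star_def]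
  ring

lemma trace_mul_conj_le_of_mem_unitary [Nonempty ι] (hV : V ∈ unitary (Matrix ι ι ℂ)) :
    V.trace * conj V.trace ≤ (Fintype.card ι : ℂ) ^ 2 := by
  have hN : (Fintype.card ι : ℂ) ≠ 0 := by exact_mod_cast Fintype.card_ne_zero
  have h := (posSemidef_conjTranspose_mul_self
    ((Fintype.card ι : ℂ) • V - V.trace • 1)).trace_nonneg
  rw [trace_conjTranspose_mul_self_sub_smul_one hV] at h
  have h' := mul_nonneg (by positivity : (0 : ℂ) ≤ (Fintype.card ι : ℂ)⁻¹) h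
  rwa [inv_mul_cancel_left₀ hN, sub_nonneg] at h'

lemma trace_mul_conj_eq_iff_of_mem_unitary [Nonempty ι] (hV : V ∈ unitary (Matrix ι ι ℂ)) :
    V.trace * conj V.trace = (Fintype.card ι : ℂ) ^ 2 ↔
      ∃ θ : ℝ, V = exp (θ * I) • 1 := by
  have hN : (Fintype.card ι : ℂ) ≠ 0 := by exact_mod_cast Fintype.card_ne_zero
  constructor
  · intro h
    have hA := trace_conjTranspose_mul_self_sub_smul_one hV
    rw [h, sub_self, mul_zero, trace_conjTranspose_mul_self_eq_zero_iff, sub_eq_zero] at hA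
    set μ := V.trace / Fintype.card ι
    have hVμ : V = μ • 1 := by
      rw [← inv_smul_smul₀ hN V, hA, smul_smul, inv_mul_eq_div]
    have hμ : ‖μ‖ = 1 := by
      have : μ * conj μ = 1 := by
        rw [map_div₀, div_mul_div_comm, h, map_natCast, ← sq, div_self (pow_ne_zero 2 hN)]
      rw [mul_conj, normSq_eq_norm_sq] at this
      exact (pow_eq_one_iff_of_nonneg (norm_nonneg μ) two_ne_zero).1 (by exact_mod_cast this)
    have hexp : exp (μ.arg * I) = μ := by simpa [hμ] using norm_mul_exp_arg_mul_I μ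
    exact ⟨μ.arg, by rw [hVμ, hexp]⟩
  · rintro ⟨θ, rfl⟩
    have : exp (θ * I) * conj (exp (θ * I)) = 1 := by
      rw [mul_conj, normSq_eq_norm_sq, norm_exp_ofReal_mul_I]; norm_num
    rw [trace_smul, trace_one, smul_eq_mul, map_mul, map_natCast]
    linear_combination (Fintype.card ι : ℂ) ^ 2 * this

end UnitaryTrace

lemma _root_.AddChar.map_sum_eq_prod {A M ι : Type*} [AddCommMonoid A] [CommMonoid M]
    (ψ : AddChar A M) (s : Finset ι) (f : ι → A) :
    ψ (∑ i ∈ s, f i) = ∏ i ∈ s, ψ (f i) :=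
  map_prod ψ.toMonoidHom (fun i => Multiplicative.ofAdd (f i)) s

lemma sum_stdAddChar_dotProduct {ι : Type*} [Fintype ι] [DecidableEq ι] {N : ℕ} [NeZero N]
    (c : ι → ZMod N) :
    ∑ u : ι → ZMod N, ZMod.stdAddChar (c ⬝ᵥ u) =
      if c = 0 then (N : ℂ) ^ Fintype.card ι else 0 := by
  have h i := AddChar.sum_mulShift (c i) (ZMod.isPrimitive_stdAddChar N)
  simp only [dotProduct, AddChar.map_sum_eq_prod]
  rw [← Fintype.prod_sum (fun i x => ZMod.stdAddChar (c i * x))]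
  simp [mul_comm (c _), h, Finset.prod_ite_zero, funext_iff]

section Weyl

lemma omg_pow_val (a : ZMod d) : omg d ^ a.val = ZMod.stdAddChar a := by
  rw [ZMod.stdAddChar_apply, ZMod.toCircle_apply, omg, ← Complex.exp_nat_mul]
  congr 1
  ring

omit [NeZero d] in
lemma norm_tau : ‖tau d‖ = 1 := by
  have : (Real.pi : ℂ) * I / d = ((Real.pi / d : ℝ) : ℂ) * I := by push_cast; ring
  rw [tau, this, norm_mul, norm_exp_ofReal_mul_I]
  simp

omit [NeZero d] in
lemma tau_zpow_mul_star_self (z : ℤ) : tau d ^ z * star (tau d ^ z) = 1 := by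
  rw [RCLike.star_def, mul_conj', norm_zpow, norm_tau, _root_.one_zpow]
  norm_num

lemma xop_mul_apply (v : Fin n → ZMod d) (A : Mat d n) (s t : Fin n → ZMod d) :
    (Xop d n v * A) s t = A (s - v) t := by
  simp [Xop, Matrix.mul_apply, ← sub_eq_iff_eq_add]

lemma mul_conjTranspose_xop_apply (v : Fin n → ZMod d) (A : Mat d n) (s t : Fin n → ZMod d) :
    (A * (Xop d n v)ᴴ) s t = A s (t - v) := by
  simp [Xop, Matrix.mul_apply, ← sub_eq_iff_eq_add]

lemma weyl_mul_mul_conjTranspose_apply (h : PSpace d n) (A : Mat d n) (s t : Fin n → ZMod d) :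
    (Weyl d n h * A * (Weyl d n h)ᴴ) s t
      = ZMod.stdAddChar ((s - t) ⬝ᵥ h.1) * A (s - h.2) (t - h.2) := by
  have hZX : Zop d n h.1 * Xop d n h.2 * A * (Zop d n h.1 * Xop d n h.2)ᴴ
      = Zop d n h.1 * (Xop d n h.2 * A * (Xop d n h.2)ᴴ) * (Zop d n h.1)ᴴ := by
    simp only [conjTranspose_mul, Matrix.mul_assoc]
  rw [Weyl, conjTranspose_smul, Matrix.smul_mul, Matrix.smul_mul, Matrix.mul_smul, smul_smul,
    tau_zpow_mul_star_self, one_smul, hZX, Zop, diagonal_conjTranspose, mul_diagonal,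
    diagonal_mul, mul_conjTranspose_xop_apply, xop_mul_apply]
  simp only [omg_pow_val, Pi.star_apply, RCLike.star_def]
  rw [sub_dotProduct, AddChar.map_sub_eq_div, ← AddChar.inv_apply_eq_conj, dotProduct,
    dotProduct]
  ring

lemma weyl_mem_unitary (h : PSpace d n) : Weyl d n h ∈ unitary (Mat d n) := by
  refine Matrix.mem_unitaryGroup_iff.2 (Matrix.ext fun s t => ?_)
  have := weyl_mul_mul_conjTranspose_apply h 1 s t
  rw [Matrix.mul_one] at this
  rw [star_eq_conjTranspose, this]
  rcases eq_or_ne s t with rfl | hst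
  · simp
  · simp [hst, Matrix.one_apply_ne (sub_left_injective.ne hst)]

lemma sum_weyl_mul_mul_conjTranspose (A : Mat d n) :
    ∑ h : PSpace d n, Weyl d n h * A * (Weyl d n h)ᴴ = ((d : ℂ) ^ n * A.trace) • 1 := by
  ext s t
  simp_rw [Matrix.sum_apply, weyl_mul_mul_conjTranspose_apply, Fintype.sum_prod_type]
  rw [← Finset.sum_mul_sum, sum_stdAddChar_dotProduct, Fintype.card_fin]
  rcases eq_or_ne s t with rfl | hst
  · have htr : ∑ v, A (s - v) (s - v) = A.trace :=
      Equiv.sum_comp (Equiv.subLeft s) (fun w => A w w)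
    simp [htr]
  · simp [sub_eq_zero, hst, Matrix.one_apply_ne hst]

lemma pderiv_mem_unitary (h : PSpace d n) {U : Mat d n} (hU : U ∈ unitary (Mat d n)) :
    pderiv d n h U ∈ unitary (Mat d n) := by
  have hW := weyl_mem_unitary h
  rw [pderiv, ← star_eq_conjTranspose, ← star_eq_conjTranspose]
  exact mul_mem (mul_mem (mul_mem hW hU) (Unitary.star_mem hW)) (Unitary.star_mem hU)

end Weyl

section PauliNorm

lemma natCast_card_fun_zmod : (Fintype.card (Fin n → ZMod d) : ℂ) = (d : ℂ) ^ n := by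
  simp

lemma pq_succ_eq_expect (k : ℕ) (U : Mat d n) :
    pq d n (k + 1) U = 𝔼 h, pq d n k (pderiv d n h U) := by
  rw [pq, Fintype.expect_eq_sum_div_card]
  simp [Fintype.card_prod, pow_mul', ← sq, div_eq_inv_mul]

lemma pq_one (V : Mat d n) :
    pq d n 1 V = (((d : ℂ) ^ n) ^ 2)⁻¹ * (V.trace * conj V.trace) := by
  have hsum : ∑ h, pderiv d n h V = ((d : ℂ) ^ n * V.trace) • Vᴴ := by
    simp only [pderiv]
    rw [← Finset.sum_mul, sum_weyl_mul_mul_conjTranspose, Matrix.smul_mul, Matrix.one_mul]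
  simp only [pq, ← Finset.mul_sum, ← trace_sum, hsum, trace_smul, trace_conjTranspose,
    smul_eq_mul, RCLike.star_def]
  have hd : (d : ℂ) ≠ 0 := NeZero.ne _
  field_simp
  ring

lemma pq_succ_mem_Icc (k : ℕ) {V : Mat d n} (hV : V ∈ unitary (Mat d n)) :
    pq d n (k + 1) V ∈ Set.Icc 0 1 := by
  induction k generalizing V with
  | zero =>
    have hle := trace_mul_conj_le_of_mem_unitary hV
    rw [natCast_card_fun_zmod] at hle
    have hN : ((d : ℂ) ^ n) ^ 2 ≠ 0 := by simp [NeZero.ne d]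
    have hnonneg : 0 ≤ V.trace * conj V.trace := by
      rw [mul_conj]
      exact Complex.zero_le_real.2 (normSq_nonneg _)
    rw [pq_one]
    refine ⟨mul_nonneg (by positivity) hnonneg, ?_⟩
    calc (((d : ℂ) ^ n) ^ 2)⁻¹ * (V.trace * conj V.trace)
        ≤ (((d : ℂ) ^ n) ^ 2)⁻¹ * ((d : ℂ) ^ n) ^ 2 :=
          mul_le_mul_of_nonneg_left hle (by positivity)
      _ = 1 := inv_mul_cancel₀ hN
  | succ k ih =>
    rw [pq_succ_eq_expect]
    exact ⟨Finset.expect_nonneg fun h _ => (ih (pderiv_mem_unitary h hV)).1,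
      Finset.expect_le Finset.univ_nonempty fun h _ => (ih (pderiv_mem_unitary h hV)).2⟩

lemma pq_succ_eq_one_iff (k : ℕ) {V : Mat d n} (hV : V ∈ unitary (Mat d n)) :
    pq d n (k + 1) V = 1 ↔ V ∈ ppoly d n k := by
  induction k generalizing V with
  | zero =>
    rw [pq_one, inv_mul_eq_one₀ (by simp [NeZero.ne d]), eq_comm, ← natCast_card_fun_zmod]
    exact trace_mul_conj_eq_iff_of_mem_unitary hV
  | succ k ih =>
    rw [pq_succ_eq_expect,
      Fintype.expect_eq_iff_of_le fun h => (pq_succ_mem_Icc k (pderiv_mem_unitary h hV)).2]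
    simp only [ppoly, Set.mem_ofPred_eq, hV, true_and, ← ih (pderiv_mem_unitary _ hV)]

end PauliNorm

theorem stmt8_general (d n : ℕ) [NeZero d]
    (k : ℕ) (hk : 1 ≤ k) (U : Mat d n) (hU : U ∈ unitary (Mat d n)) :
    pq d n k U = 1 ↔ U ∈ ppoly d n (k - 1) := by
  obtain ⟨k, rfl⟩ := Nat.exists_eq_add_of_le' hk
  exact pq_succ_eq_one_iff k hU

theorem stmt8 (d n : ℕ) [NeZero d] (hd : d.Prime) (hn : 1 ≤ n)
    (k : ℕ) (hk : 1 ≤ k) (U : Mat d n) (hU : U ∈ unitary (Mat d n)) :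
    pq d n k U = 1 ↔ U ∈ ppoly d n (k - 1) :=
  stmt8_general d n k hk U hU

end CH
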